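/- The join L2^1 ∨ R2^1 has the finite basis {x ≈ x², xszx ≈ xsxzx} and equals the meet R3^1 ∧ L3^1. Precisely: (a) an identity u ≈ v is a consequence of {x ≈ x², xszx ≈ xsxzx} if and only if it holds both in L2^1 and in R2^1; and (b) a monoid satisfies {x ≈ x², xszx ≈ xsxzx} if and only if it satisfies both {x ≈ x², x₁x₂x₃ ≈ x₁x₂x₃x₁x₃x₂x₃} and {x ≈ x², x₃x₂x₁ ≈ x₃x₂x₃x₁x₃x₂x₁}. -/

import Mathlib

/-- A word over the fixed countably infinite alphabet ℕ. -/
abbrev Word : Type := List ℕ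

/-- An identity `u ≈ v` is a pair of words. -/
abbrev Eqn : Type := Word × Word

/-- A monoid `M` satisfies the identity `e` if every evaluation of letters in `M`
gives the same value to both sides. -/
def Satisfies (M : Type) [Monoid M] (e : Eqn) : Prop :=
  ∀ φ : ℕ → M, (e.1.map φ).prod = (e.2.map φ).prod

/-- A monoid `M` satisfies a set of identities `S` if it satisfies each member. -/
def SatisfiesSet (M : Type) [Monoid M] (S : Set Eqn) : Prop :=
  ∀ e ∈ S, Satisfies M e

/-- The identity `e` is a consequence of `S` (holds in the variety `var S`)
if every monoid satisfying `S` satisfies `e`. -/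
def Consequence (S : Set Eqn) (e : Eqn) : Prop :=
  ∀ (M : Type) [Monoid M], SatisfiesSet M S → Satisfies M e

-- Letters: `x = 0`, `y = 1`, `z = 2`, `s = 3`, `t = 4`.
/-- Basis of `L₂¹`: `{x ≈ x², xy ≈ xyx}`. -/
def L2Basis : Set Eqn := {([0], [0, 0]), ([0, 1], [0, 1, 0])}

/-- Basis of `R₂¹`: `{x ≈ x², xy ≈ yxy}`. -/
def R2Basis : Set Eqn := {([0], [0, 0]), ([0, 1], [1, 0, 1])}

/-- Basis of `R₃¹`: `{x ≈ x², x₁x₂x₃ ≈ x₁x₂x₃x₁x₃x₂x₃}` (letters `x₁ = 0`, `x₂ = 1`, `x₃ = 2`). -/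
def R3Basis : Set Eqn := {([0], [0, 0]), ([0, 1, 2], [0, 1, 2, 0, 2, 1, 2])}

/-- Basis of `L₃¹`: `{x ≈ x², x₃x₂x₁ ≈ x₃x₂x₃x₁x₃x₂x₁}`. -/
def L3Basis : Set Eqn := {([0], [0, 0]), ([2, 1, 0], [2, 1, 2, 0, 2, 1, 0])}

/-!
In a monoid satisfying `x ≈ x²` and `xszx ≈ xsxzx`, an occurrence of a letter `x` lying between
two other occurrences of `x` may be deleted, and so may any factor all of whose letters occur
both to its left and to its right. Hence every word `u` equals `u₁ u₂`, where
`u₁ = u.eraseDups` keeps the first occurrence of each letter and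
`u₂ = u.reverse.eraseDups.reverse` keeps the last one. These are exactly the values of `u` in
the free left regular band (a model of `L₂¹`) and in the free right regular band (a model of
`R₂¹`), which gives (a). For (b), the identities of `R₃¹` and `L₃¹` have the same first- and
last-occurrence words on both sides, and conversely `xszx ≈ xsxzx` follows from them by a
substitution.
-/

namespace List

variable {α : Type*} [DecidableEq α]

theorem eraseDups_filter (p : α → Bool) (l : List α) :
    (l.filter p).eraseDups = l.eraseDups.filter p := by
  induction h : l.length using Nat.strong_induction_on generalizing l with
  | _ n ih =>
    subst h
    rcases l with _ | ⟨a, t⟩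
    · rfl
    have ih' := ih _ (Nat.lt_succ_of_le (length_filter_le (fun b => !b == a) t)) _ rfl
    rw [eraseDups_cons, filter_cons]
    split
    · rw [eraseDups_cons, filter_cons_of_pos ‹_›, filter_comm, ih']
    · rw [filter_cons_of_neg ‹_›, ← ih', filter_filter]
      congr 2
      funext b
      by_cases hb : b = a <;> simp_all

theorem eraseDups_cons_eq_cons_filter (a : α) (l : List α) :
    (a :: l).eraseDups = a :: l.eraseDups.filter (· ≠ a) := by
  rw [eraseDups_cons, eraseDups_filter]
  simp only [_root_.beq_eq_decide, decide_not]

end List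

section Band

variable {α M : Type*} [DecidableEq α] [Monoid M] (φ : α → M)
  (hI : ∀ x : M, x * x = x) (hR : ∀ x s z : M, x * s * z * x = x * s * x * z * x)

include hR in
theorem mul_prod_map_mul_eq_filter (a : α) (m : M) (w : List α) :
    φ a * m * (w.map φ).prod * φ a = φ a * m * ((w.filter (· ≠ a)).map φ).prod * φ a := by
  induction w generalizing m with
  | nil => rfl
  | cons b w ih =>
    by_cases hb : b = a
    · subst hb
      rw [List.filter_cons_of_neg (by simp), ← ih, List.map_cons, List.prod_cons, ← mul_assoc,
        ← hR, mul_assoc (φ b * m)]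
    · rw [List.filter_cons_of_pos (by simpa using hb)]
      simpa only [List.map_cons, List.prod_cons, mul_assoc] using ih (m * φ b)

include hI hR in
theorem prod_map_eq_eraseDups_mul (u : List α) :
    (u.map φ).prod = (u.eraseDups.map φ).prod * (u.map φ).prod := by
  induction u with
  | nil => simp
  | cons a u ih =>
    set e := (u.eraseDups.map φ).prod
    have hfilter := congrArg (· * (u.map φ).prod)
      (mul_prod_map_mul_eq_filter φ hR a 1 u.eraseDups)
    simp only [mul_one] at hfilter
    calc ((a :: u).map φ).prod = φ a * e * (u.map φ).prod := by
          rw [List.map_cons, List.prod_cons, mul_assoc, ← ih]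
      _ = φ a * e * (φ a * e) * (u.map φ).prod := by rw [hI]
      _ = φ a * e * φ a * (u.map φ).prod := by
          conv_rhs => rw [ih]
          simp only [mul_assoc]
      _ = (((a :: u).eraseDups).map φ).prod * ((a :: u).map φ).prod := by
          rw [hfilter, List.eraseDups_cons_eq_cons_filter]; simp [mul_assoc]

omit [DecidableEq α] in
include hR in
theorem prod_mul_prod_mul_prod_of_subset {m p q : List α} (hp : m ⊆ p) (hq : m ⊆ q) :
    (p.map φ).prod * (m.map φ).prod * (q.map φ).prod = (p.map φ).prod * (q.map φ).prod := by
  induction m with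
  | nil => simp
  | cons a m ih =>
    obtain ⟨p₁, p₂, rfl⟩ := List.append_of_mem (hp (List.mem_cons_self ..))
    obtain ⟨q₁, q₂, rfl⟩ := List.append_of_mem (hq (List.mem_cons_self ..))
    rw [← ih (List.subset_of_cons_subset hp) (List.subset_of_cons_subset hq)]
    have := congrArg (fun z => (p₁.map φ).prod * (z * (q₂.map φ).prod))
      (hR (φ a) (p₂.map φ).prod ((m.map φ).prod * (q₁.map φ).prod))
    simpa [mul_assoc] using this.symm

include hI hR in
theorem prod_map_eq_mul_reverse_eraseDups (u : List α) :
    (u.map φ).prod = (u.map φ).prod * ((u.reverse.eraseDups.reverse).map φ).prod := by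
  have hI' : ∀ x : Mᵐᵒᵖ, x * x = x := fun x => MulOpposite.unop_injective (hI x.unop)
  have hR' : ∀ x s z : Mᵐᵒᵖ, x * s * z * x = x * s * x * z * x := fun x s z =>
    MulOpposite.unop_injective (by simpa [mul_assoc] using hR x.unop z.unop s.unop)
  have hop (w : List α) :
      (w.map (MulOpposite.op ∘ φ)).prod = MulOpposite.op (w.reverse.map φ).prod := by
    simp [MulOpposite.op_list_prod, List.map_reverse]
  have := congrArg MulOpposite.unop
    (prod_map_eq_eraseDups_mul (MulOpposite.op ∘ φ) hI' hR' u.reverse)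
  rw [hop, hop, List.reverse_reverse] at this
  simpa using this

include hI hR in
theorem prod_map_eq_eraseDups_mul_reverse_eraseDups (u : List α) :
    (u.map φ).prod = (u.eraseDups.map φ).prod * ((u.reverse.eraseDups.reverse).map φ).prod := by
  calc (u.map φ).prod
      = (u.eraseDups.map φ).prod * (u.map φ).prod *
          ((u.reverse.eraseDups.reverse).map φ).prod := by
        rw [mul_assoc, ← prod_map_eq_mul_reverse_eraseDups φ hI hR,
          ← prod_map_eq_eraseDups_mul φ hI hR]
    _ = (u.eraseDups.map φ).prod * ((u.reverse.eraseDups.reverse).map φ).prod :=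
        prod_mul_prod_mul_prod_of_subset φ hR (fun x hx => by simpa using hx)
          (fun x hx => by simpa using hx)

end Band

/-- Multiplication appends the letters of the right factor that do not occur in the left one;
the one-letter lists generate the free left regular band monoid. -/
@[ext] structure FreeLeftRegularBand (α : Type) where
  toList : List α

namespace FreeLeftRegularBand

variable {α : Type} [DecidableEq α]

instance : Monoid (FreeLeftRegularBand α) where
  one := ⟨[]⟩
  mul u v := ⟨u.toList ++ v.toList.filter (· ∉ u.toList)⟩
  one_mul u := by ext1; exact List.filter_true u.toList
  mul_one u := by ext1; exact List.append_nil u.toList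
  mul_assoc u v w := by
    ext1
    change (u.toList ++ v.toList.filter (· ∉ u.toList)) ++
        w.toList.filter (· ∉ u.toList ++ v.toList.filter (· ∉ u.toList)) =
      u.toList ++ (v.toList ++ w.toList.filter (· ∉ v.toList)).filter (· ∉ u.toList)
    simp only [List.append_assoc, List.filter_append, List.filter_filter]
    congr 2
    apply List.filter_congr
    intro x _
    by_cases hu : x ∈ u.toList <;> simp [hu]

theorem toList_mul (u v : FreeLeftRegularBand α) :
    (u * v).toList = u.toList ++ v.toList.filter (· ∉ u.toList) := rfl

theorem mul_self (u : FreeLeftRegularBand α) : u * u = u := by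
  ext1
  rw [toList_mul, List.filter_eq_nil_iff.2 (fun a ha => by simp [ha]), List.append_nil]

theorem mul_mul_self (u v : FreeLeftRegularBand α) : u * v * u = u * v := by
  ext1
  rw [toList_mul _ u, List.filter_eq_nil_iff.2 (fun a ha => by simp [toList_mul, ha]),
    List.append_nil]

theorem prod_map_mk_singleton (w : List α) :
    (w.map fun a => (⟨[a]⟩ : FreeLeftRegularBand α)).prod = ⟨w.eraseDups⟩ := by
  induction w with
  | nil => rfl
  | cons a w ih =>
    ext1
    rw [List.map_cons, List.prod_cons, ih, toList_mul, List.eraseDups_cons_eq_cons_filter]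
    simp

end FreeLeftRegularBand

def JoinBasis : Set Eqn := {([0], [0, 0]), ([0, 3, 2, 0], [0, 3, 0, 2, 0])}

section Identities

variable {M : Type} [Monoid M]

theorem satisfiesSet_pair_iff {e₁ e₂ : Eqn} :
    SatisfiesSet M {e₁, e₂} ↔ Satisfies M e₁ ∧ Satisfies M e₂ := by
  simp [SatisfiesSet]

theorem satisfies_idem_iff : Satisfies M ([0], [0, 0]) ↔ ∀ x : M, x * x = x :=
  ⟨fun h x => by simpa using (h fun _ => x).symm, fun h φ => by simpa using (h (φ 0)).symm⟩

theorem satisfies_xszx_iff :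
    Satisfies M ([0, 3, 2, 0], [0, 3, 0, 2, 0]) ↔
      ∀ x s z : M, x * s * z * x = x * s * x * z * x := by
  refine ⟨fun h x s z => ?_, fun h φ => by simpa [mul_assoc] using h (φ 0) (φ 3) (φ 2)⟩
  simpa [mul_assoc] using h fun n => if n = 0 then x else if n = 3 then s else z

theorem satisfies_xy_xyx_iff :
    Satisfies M ([0, 1], [0, 1, 0]) ↔ ∀ x y : M, x * y = x * y * x := by
  refine ⟨fun h x y => ?_, fun h φ => by simpa [mul_assoc] using h (φ 0) (φ 1)⟩
  simpa [mul_assoc] using h fun n => if n = 0 then x else y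

theorem satisfies_xy_yxy_iff :
    Satisfies M ([0, 1], [1, 0, 1]) ↔ ∀ x y : M, x * y = y * x * y := by
  refine ⟨fun h x y => ?_, fun h φ => by simpa [mul_assoc] using h (φ 0) (φ 1)⟩
  simpa [mul_assoc] using h fun n => if n = 0 then x else y

theorem Satisfies.r3_law (h : Satisfies M ([0, 1, 2], [0, 1, 2, 0, 2, 1, 2])) (x y z : M) :
    x * y * z = x * y * z * x * z * y * z := by
  simpa [mul_assoc] using h fun n => if n = 0 then x else if n = 1 then y else z

theorem Satisfies.l3_law (h : Satisfies M ([2, 1, 0], [2, 1, 2, 0, 2, 1, 0])) (x y z : M) :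
    x * y * z = x * y * x * z * x * y * z := by
  simpa [mul_assoc] using h fun n => if n = 2 then x else if n = 1 then y else z

end Identities

theorem Consequence.mono {S T : Set Eqn} {e : Eqn}
    (hST : ∀ (M : Type) [Monoid M], SatisfiesSet M T → SatisfiesSet M S) (h : Consequence S e) :
    Consequence T e :=
  fun M _ hT => h M (hST M hT)

section JoinBasis

variable {M : Type} [Monoid M]

theorem satisfiesSet_joinBasis_iff :
    SatisfiesSet M JoinBasis ↔
      (∀ x : M, x * x = x) ∧ ∀ x s z : M, x * s * z * x = x * s * x * z * x := by
  rw [JoinBasis, satisfiesSet_pair_iff, satisfies_idem_iff, satisfies_xszx_iff]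

theorem satisfiesSet_joinBasis_of_L2Basis (h : SatisfiesSet M L2Basis) :
    SatisfiesSet M JoinBasis := by
  rw [L2Basis, satisfiesSet_pair_iff, satisfies_idem_iff, satisfies_xy_xyx_iff] at h
  refine satisfiesSet_joinBasis_iff.2 ⟨h.1, fun x s z => ?_⟩
  rw [← h.2 x s]

theorem satisfiesSet_joinBasis_of_R2Basis (h : SatisfiesSet M R2Basis) :
    SatisfiesSet M JoinBasis := by
  rw [R2Basis, satisfiesSet_pair_iff, satisfies_idem_iff, satisfies_xy_yxy_iff] at h
  refine satisfiesSet_joinBasis_iff.2 ⟨h.1, fun x s z => ?_⟩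
  rw [mul_assoc (x * s), h.2 z x]
  simp only [mul_assoc]

theorem satisfies_of_eraseDups_eq (hM : SatisfiesSet M JoinBasis) {u v : Word}
    (hleft : u.eraseDups = v.eraseDups) (hright : u.reverse.eraseDups = v.reverse.eraseDups) :
    Satisfies M (u, v) := by
  obtain ⟨hI, hR⟩ := satisfiesSet_joinBasis_iff.1 hM
  intro φ
  rw [prod_map_eq_eraseDups_mul_reverse_eraseDups φ hI hR u,
    prod_map_eq_eraseDups_mul_reverse_eraseDups φ hI hR v, hleft, hright]

theorem satisfiesSet_R3Basis_of_joinBasis (h : SatisfiesSet M JoinBasis) :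
    SatisfiesSet M R3Basis :=
  satisfiesSet_pair_iff.2 ⟨(satisfiesSet_pair_iff.1 h).1,
    satisfies_of_eraseDups_eq h (by decide) (by decide)⟩

theorem satisfiesSet_L3Basis_of_joinBasis (h : SatisfiesSet M JoinBasis) :
    SatisfiesSet M L3Basis :=
  satisfiesSet_pair_iff.2 ⟨(satisfiesSet_pair_iff.1 h).1,
    satisfies_of_eraseDups_eq h (by decide) (by decide)⟩

theorem satisfiesSet_joinBasis_of_R3Basis_of_L3Basis (hR3 : SatisfiesSet M R3Basis)
    (hL3 : SatisfiesSet M L3Basis) : SatisfiesSet M JoinBasis := by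
  obtain ⟨hidem, hR3⟩ := satisfiesSet_pair_iff.1 hR3
  have hI := satisfies_idem_iff.1 hidem
  refine satisfiesSet_joinBasis_iff.2 ⟨hI, fun x s z => ?_⟩
  have hI' : ∀ a b : M, a * (a * b) = a * b := fun a b => by rw [← mul_assoc, hI]
  have hzx : z * (x * (z * x)) = z * x := by simpa only [mul_assoc] using hI (z * x)
  -- Both sides reduce to `xsxzxszx`: `xs(zx)` by `L₃¹` at `(x, s, zx)`, and `(xs)x(zx)` by
  -- `R₃¹` at `(xs, x, zx)`.
  have hL := (satisfiesSet_pair_iff.1 hL3).2.l3_law x s (z * x)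
  have hR := hR3.r3_law (x * s) x (z * x)
  simp only [mul_assoc, hI'] at hL hR
  rw [hzx] at hR
  simp only [mul_assoc]
  exact hL.trans hR.symm

end JoinBasis

theorem eraseDups_eq_of_consequence_L2Basis {e : Eqn} (h : Consequence L2Basis e) :
    e.1.eraseDups = e.2.eraseDups := by
  have hM : SatisfiesSet (FreeLeftRegularBand ℕ) L2Basis := by
    rw [L2Basis, satisfiesSet_pair_iff, satisfies_idem_iff, satisfies_xy_xyx_iff]
    exact ⟨FreeLeftRegularBand.mul_self, fun u v => (FreeLeftRegularBand.mul_mul_self u v).symm⟩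
  have := h _ hM fun a => ⟨[a]⟩
  simp only [FreeLeftRegularBand.prod_map_mk_singleton] at this
  exact congrArg FreeLeftRegularBand.toList this

theorem reverse_eraseDups_eq_of_consequence_R2Basis {e : Eqn} (h : Consequence R2Basis e) :
    e.1.reverse.eraseDups = e.2.reverse.eraseDups := by
  have hM : SatisfiesSet (FreeLeftRegularBand ℕ)ᵐᵒᵖ R2Basis := by
    rw [R2Basis, satisfiesSet_pair_iff, satisfies_idem_iff, satisfies_xy_yxy_iff]
    exact ⟨fun u => congrArg MulOpposite.op (FreeLeftRegularBand.mul_self u.unop),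
      fun u v => MulOpposite.unop_injective <| by
        simpa [mul_assoc] using (FreeLeftRegularBand.mul_mul_self v.unop u.unop).symm⟩
  have hprod (w : Word) :
      ((w.map fun a => MulOpposite.op (⟨[a]⟩ : FreeLeftRegularBand ℕ)).prod).unop =
        ⟨w.reverse.eraseDups⟩ := by
    rw [MulOpposite.unop_list_prod, List.map_map, ← List.map_reverse]
    exact FreeLeftRegularBand.prod_map_mk_singleton _
  have := congrArg MulOpposite.unop (h _ hM fun a => MulOpposite.op ⟨[a]⟩)
  rw [hprod, hprod] at this
  exact congrArg FreeLeftRegularBand.toList this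

theorem consequence_joinBasis_iff (e : Eqn) :
    Consequence JoinBasis e ↔ Consequence L2Basis e ∧ Consequence R2Basis e := by
  constructor
  · intro h
    exact ⟨h.mono fun M _ => satisfiesSet_joinBasis_of_L2Basis,
      h.mono fun M _ => satisfiesSet_joinBasis_of_R2Basis⟩
  · rintro ⟨hL2, hR2⟩ M _ hM
    exact satisfies_of_eraseDups_eq hM (eraseDups_eq_of_consequence_L2Basis hL2)
      (reverse_eraseDups_eq_of_consequence_R2Basis hR2)

/-- `L₂¹ ∨ R₂¹` has finite basis `{x ≈ x², xszx ≈ xsxzx}`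
(`x = 0`, `z = 2`, `s = 3`) and equals `R₃¹ ∧ L₃¹`:
(a) an identity is a consequence of this basis iff it holds in both `L₂¹` and `R₂¹`;
(b) a monoid satisfies this basis iff it satisfies the bases of both `R₃¹` and `L₃¹`. -/
theorem statement0 :
    (∀ e : Eqn,
      Consequence ({([0], [0, 0]), ([0, 3, 2, 0], [0, 3, 0, 2, 0])} : Set Eqn) e ↔
        (Consequence L2Basis e ∧ Consequence R2Basis e)) ∧
    (∀ (M : Type) [Monoid M],
      SatisfiesSet M ({([0], [0, 0]), ([0, 3, 2, 0], [0, 3, 0, 2, 0])} : Set Eqn) ↔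
        (SatisfiesSet M R3Basis ∧ SatisfiesSet M L3Basis)) :=
  ⟨consequence_joinBasis_iff, fun _ _ =>
    ⟨fun h => ⟨satisfiesSet_R3Basis_of_joinBasis h, satisfiesSet_L3Basis_of_joinBasis h⟩,
      fun ⟨hR3, hL3⟩ => satisfiesSet_joinBasis_of_R3Basis_of_L3Basis hR3 hL3⟩⟩
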